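/- Let G be a compact group acting linearly on a finite dimensional real vector space V, and let {p_1,...,p_r} be a set of G-invariant polynomials generating the algebra of all G-invariant polynomials on V. Then for u, v ∈ V, p_i(u) = p_i(v) for all i = 1,...,r if and only if u and v lie in the same G-orbit. -/

import Mathlib

/-- The polynomial functions on a real vector space `V`: the subalgebra of `V → ℝ`
generated by the linear functionals. -/
def polyFuns (V : Type*) [AddCommGroup V] [Module ℝ V] : Subalgebra ℝ (V → ℝ) :=
  Algebra.adjoin ℝ (Set.range fun l : Module.Dual ℝ V => (l : V → ℝ))

/-!
If `u ∉ G • v`, the two orbits are disjoint compact sets, so by Urysohn and Stone–Weierstrass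
some polynomial function `f` is `< 1/3` on `G • v` and `> 2/3` on `G • u`. Averaging `f` over `G`
against a Haar probability measure keeps these bounds and produces a `G`-invariant function. The
average is again polynomial, because all translates of `f` lie in the finite-dimensional space of
polynomial functions of degree at most `deg f`. Being invariant, it is a polynomial in the `p i`,
which therefore cannot all agree at `u` and `v`.
-/

open MeasureTheory

theorem Algebra.exists_mem_pow_of_mem_adjoin {R A : Type*} [CommSemiring R] [Semiring A]
    [Algebra R A] {s : Set A} {x : A} (hx : x ∈ Algebra.adjoin R s) :
    ∃ n : ℕ, x ∈ (1 ⊔ Submodule.span R s) ^ n := by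
  set M := 1 ⊔ Submodule.span R s
  have hM : 1 ≤ M := le_sup_left
  induction hx using Algebra.adjoin_induction with
  | mem x hx =>
    exact ⟨1, by rw [pow_one]; exact (le_sup_right : _ ≤ M) (Submodule.subset_span hx)⟩
  | algebraMap r => exact ⟨0, by rw [pow_zero]; exact Submodule.algebraMap_mem r⟩
  | add x y _ _ hx hy =>
    obtain ⟨n, hn⟩ := hx
    obtain ⟨m, hm⟩ := hy
    exact ⟨n + m, add_mem (pow_le_pow_right' hM (by omega) hn)
      (pow_le_pow_right' hM (by omega) hm)⟩
  | mul x y _ _ hx hy =>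
    obtain ⟨n, hn⟩ := hx
    obtain ⟨m, hm⟩ := hy
    exact ⟨n + m, pow_add M n m ▸ Submodule.mul_mem_mul hn hm⟩

theorem apply_eq_apply_of_mem_adjoin {R X : Type*} [CommSemiring R] {s : Set (X → R)} {u v : X}
    (h : ∀ f ∈ s, f u = f v) {f : X → R} (hf : f ∈ Algebra.adjoin R s) : f u = f v :=
  (Algebra.adjoin_le (S := AlgHom.equalizer (Pi.evalAlgHom R (fun _ => R) u)
    (Pi.evalAlgHom R (fun _ => R) v)) h) hf

def precompAlgHom (R : Type*) [CommSemiring R] {X Y : Type*} (σ : X → Y) :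
    (Y → R) →ₐ[R] (X → R) :=
  AlgHom.pi fun x => Pi.evalAlgHom R (fun _ => R) (σ x)

@[simp]
theorem precompAlgHom_apply (R : Type*) [CommSemiring R] {X Y : Type*} (σ : X → Y)
    (f : Y → R) : precompAlgHom R σ f = f ∘ σ := rfl

/- The coordinates of a basis of `W` are continuous for the topology of pointwise convergence,
so the integral can be computed in these coordinates. -/
theorem integral_apply_mem_of_forall_mem {X G : Type*} [TopologicalSpace G] [CompactSpace G]
    [MeasurableSpace G] [OpensMeasurableSpace G] (μ : Measure G) [IsFiniteMeasure μ]
    (W : Submodule ℝ (X → ℝ)) [FiniteDimensional ℝ W] {F : G → X → ℝ} (hFW : ∀ g, F g ∈ W)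
    (hF : ∀ x, Continuous fun g => F g x) : (fun x => ∫ g, F g x ∂μ) ∈ W := by
  let e := (Module.finBasis ℝ W).equivFun
  let c : G → Fin (Module.finrank ℝ W) → ℝ := fun g => e ⟨F g, hFW g⟩
  have hc : Continuous c :=
    (LinearMap.continuous_of_finiteDimensional e.toLinearMap).comp
      ((continuous_pi hF).subtype_mk _)
  have hc_int : Integrable c μ := hc.integrable_of_hasCompactSupport (.of_compactSpace c)
  suffices h : (e.symm (∫ g, c g ∂μ) : X → ℝ) = fun x => ∫ g, F g x ∂μ from h ▸ (e.symm _).2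
  funext x
  let evalAt : (Fin (Module.finrank ℝ W) → ℝ) →L[ℝ] ℝ :=
    (((LinearMap.proj x).comp W.subtype).comp e.symm.toLinearMap).toContinuousLinearMap
  simpa [evalAt, c] using (evalAt.integral_comp_comm hc_int).symm

theorem exists_isProbabilityMeasure_isMulLeftInvariant (G : Type*) [Group G] [TopologicalSpace G]
    [IsTopologicalGroup G] [CompactSpace G] [MeasurableSpace G] [BorelSpace G] :
    ∃ μ : Measure G, IsProbabilityMeasure μ ∧ μ.IsMulLeftInvariant :=
  ⟨.haarMeasure ⊤,
    ⟨TopologicalSpace.PositiveCompacts.coe_top (α := G) ▸ Measure.haarMeasure_self⟩,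
    inferInstance⟩

section PolyFuns

variable {V : Type*} [AddCommGroup V] [Module ℝ V]

variable (V) in
def polyFunsDegreeLE (d : ℕ) : Submodule ℝ (V → ℝ) :=
  (1 ⊔ Submodule.span ℝ (Set.range fun l : Module.Dual ℝ V => (l : V → ℝ))) ^ d

instance [FiniteDimensional ℝ V] (d : ℕ) : FiniteDimensional ℝ (polyFunsDegreeLE V d) := by
  have hlin : (Submodule.span ℝ (Set.range fun l : Module.Dual ℝ V => (l : V → ℝ))).FG := by
    have h := (Module.Finite.fg_top (R := ℝ) (M := Module.Dual ℝ V)).map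
      (LinearMap.ltoFun ℝ V ℝ ℝ)
    rwa [← Submodule.span_univ, ← Submodule.span_image, Set.image_univ] at h
  have hone : (1 : Submodule ℝ (V → ℝ)).FG := by
    rw [Submodule.one_eq_span]
    exact Submodule.fg_span_singleton _
  exact Module.Finite.iff_fg.mpr ((hone.sup hlin).pow d)

theorem exists_mem_polyFunsDegreeLE {f : V → ℝ} (hf : f ∈ polyFuns V) :
    ∃ d, f ∈ polyFunsDegreeLE V d :=
  Algebra.exists_mem_pow_of_mem_adjoin hf

theorem polyFunsDegreeLE_le (d : ℕ) :
    polyFunsDegreeLE V d ≤ Subalgebra.toSubmodule (polyFuns V) := by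
  have hle : 1 ⊔ Submodule.span ℝ (Set.range fun l : Module.Dual ℝ V => (l : V → ℝ)) ≤
      Subalgebra.toSubmodule (polyFuns V) :=
    sup_le (Submodule.one_le.mpr (polyFuns V).one_mem) (Algebra.span_le_adjoin ℝ _)
  intro f hf
  exact Submodule.pow_induction_on_left _ (Subalgebra.algebraMap_mem _) (fun _ _ => add_mem)
    (fun _ hl _ hf => (polyFuns V).mul_mem (hle hl) hf) hf

theorem comp_mem_polyFunsDegreeLE {f : V → ℝ} {d : ℕ} (hf : f ∈ polyFunsDegreeLE V d)
    (T : V →ₗ[ℝ] V) : f ∘ T ∈ polyFunsDegreeLE V d := by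
  have hmap : (polyFunsDegreeLE V d).map (precompAlgHom ℝ T).toLinearMap ≤
      polyFunsDegreeLE V d := by
    rw [polyFunsDegreeLE, Submodule.map_pow, Submodule.map_sup, Submodule.map_one,
      Submodule.map_span]
    refine pow_le_pow_left' (sup_le_sup_left (Submodule.span_mono ?_) _) d
    rintro _ ⟨_, ⟨l, rfl⟩, rfl⟩
    exact ⟨l ∘ₗ T, rfl⟩
  exact hmap ⟨f, hf, rfl⟩

end PolyFuns

section Topology

variable {V : Type*} [AddCommGroup V] [Module ℝ V] [FiniteDimensional ℝ V] [TopologicalSpace V]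
  [IsTopologicalAddGroup V] [ContinuousSMul ℝ V] [T2Space V]

theorem continuous_of_mem_polyFuns {f : V → ℝ} (hf : f ∈ polyFuns V) : Continuous f := by
  induction hf using Algebra.adjoin_induction with
  | mem _ hf =>
    obtain ⟨l, rfl⟩ := hf
    exact LinearMap.continuous_of_finiteDimensional l
  | algebraMap r => exact continuous_const
  | add _ _ _ _ hf hg => exact hf.add hg
  | mul _ _ _ _ hf hg => exact hf.mul hg

theorem exists_mem_polyFuns_near {K : Set V} (hK : IsCompact K) (F : C(K, ℝ)) {ε : ℝ}
    (hε : 0 < ε) : ∃ f ∈ polyFuns V, ∀ x : K, |f x - F x| < ε := by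
  have := isCompact_iff_compactSpace.mp hK
  let restrict (l : Module.Dual ℝ V) : C(K, ℝ) :=
    ⟨fun x => l x, (LinearMap.continuous_of_finiteDimensional l).comp continuous_subtype_val⟩
  let S : Subalgebra ℝ C(K, ℝ) := Algebra.adjoin ℝ (Set.range restrict)
  have hS : S.SeparatesPoints := by
    intro x y hxy
    obtain ⟨l, hl⟩ : ∃ l : Module.Dual ℝ V, l (x - y) ≠ 0 := by
      by_contra! h
      exact hxy (Subtype.ext (sub_eq_zero.mp ((Module.forall_dual_apply_eq_zero_iff ℝ _).mp h)))
    refine ⟨restrict l, ⟨restrict l, Algebra.subset_adjoin ⟨l, rfl⟩, rfl⟩, ?_⟩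
    simpa [restrict, sub_eq_zero] using hl
  obtain ⟨⟨g, hgS⟩, hg⟩ :=
    ContinuousMap.exists_mem_subalgebra_near_continuous_of_separatesPoints S hS F F.continuous ε hε
  have hmap : S.map (ContinuousMap.coeFnAlgHom ℝ) =
      (polyFuns V).map (precompAlgHom ℝ Subtype.val) := by
    rw [AlgHom.map_adjoin, polyFuns, AlgHom.map_adjoin, ← Set.range_comp, ← Set.range_comp]
    rfl
  obtain ⟨f, hf, hfg⟩ : (g : K → ℝ) ∈ (polyFuns V).map (precompAlgHom ℝ Subtype.val) :=
    hmap ▸ ⟨g, hgS, rfl⟩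
  exact ⟨f, hf, fun x => by simpa [← hfg] using hg x⟩

theorem exists_mem_polyFuns_separating {s t : Set V} (hs : IsCompact s) (ht : IsCompact t)
    (hst : Disjoint s t) : ∃ f ∈ polyFuns V, (∀ x ∈ s, f x < 1 / 3) ∧ ∀ x ∈ t, 2 / 3 < f x := by
  have := isCompact_iff_compactSpace.mp (hs.union ht)
  obtain ⟨F, hFs, hFt, -⟩ := exists_continuous_zero_one_of_isClosed
    (hs.isClosed.preimage continuous_subtype_val) (ht.isClosed.preimage continuous_subtype_val)
    (hst.preimage ((↑) : ↥(s ∪ t) → V))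
  obtain ⟨f, hf, hfF⟩ := exists_mem_polyFuns_near (hs.union ht) F (by norm_num : (0 : ℝ) < 1 / 3)
  refine ⟨f, hf, fun x hx => ?_, fun x hx => ?_⟩
  · have h := hfF ⟨x, .inl hx⟩
    rw [hFs (show (⟨x, .inl hx⟩ : ↥(s ∪ t)) ∈ _ from hx), Pi.zero_apply, sub_zero] at h
    exact (abs_lt.mp h).2
  · have h := hfF ⟨x, .inr hx⟩
    rw [hFt (show (⟨x, .inr hx⟩ : ↥(s ∪ t)) ∈ _ from hx), Pi.one_apply] at h
    linarith [(abs_lt.mp h).1]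

end Topology

section Average

variable {G V : Type*} [Group G] [MulAction G V] [MeasurableSpace G]

noncomputable def orbitAverage (μ : Measure G) (f : V → ℝ) (w : V) : ℝ :=
  ∫ g, f (g⁻¹ • w) ∂μ

theorem orbitAverage_smul [MeasurableMul G] (μ : Measure G) [μ.IsMulLeftInvariant] (f : V → ℝ)
    (h : G) (w : V) : orbitAverage μ f (h • w) = orbitAverage μ f w := by
  rw [orbitAverage, orbitAverage, ← integral_mul_left_eq_self (fun g => f (g⁻¹ • w)) h⁻¹]
  simp [mul_smul]

theorem orbitAverage_const (μ : Measure G) [IsProbabilityMeasure μ] (c : ℝ) (w : V) :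
    orbitAverage μ (fun _ => c) w = c := by
  simp [orbitAverage]

variable [TopologicalSpace G] [ContinuousInv G] [CompactSpace G] [OpensMeasurableSpace G]
  [TopologicalSpace V] [ContinuousSMul G V]

theorem orbitAverage_mono (μ : Measure G) [IsFiniteMeasure μ] {f₁ f₂ : V → ℝ}
    (hf₁ : Continuous f₁) (hf₂ : Continuous f₂) {w : V}
    (h : ∀ x ∈ MulAction.orbit G w, f₁ x ≤ f₂ x) : orbitAverage μ f₁ w ≤ orbitAverage μ f₂ w := by
  have hint {f : V → ℝ} (hf : Continuous f) : Integrable (fun g : G => f (g⁻¹ • w)) μ :=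
    (hf.comp (continuous_inv.smul continuous_const)).integrable_of_hasCompactSupport
      (.of_compactSpace _)
  exact integral_mono (hint hf₁) (hint hf₂) fun g => h _ ⟨g⁻¹, rfl⟩

theorem orbitAverage_mem_polyFuns [AddCommGroup V] [Module ℝ V] [FiniteDimensional ℝ V]
    [IsTopologicalAddGroup V] [ContinuousSMul ℝ V] [T2Space V] (μ : Measure G) [IsFiniteMeasure μ]
    (hlin : ∀ g : G, IsLinearMap ℝ (fun v : V => g • v)) {f : V → ℝ} (hf : f ∈ polyFuns V) :
    orbitAverage μ f ∈ polyFuns V := by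
  obtain ⟨d, hd⟩ := exists_mem_polyFunsDegreeLE hf
  refine polyFunsDegreeLE_le d <| integral_apply_mem_of_forall_mem μ _
    (F := fun g w => f (g⁻¹ • w)) (fun g => comp_mem_polyFunsDegreeLE hd (hlin g⁻¹).mk')
    fun w => ?_
  exact (continuous_of_mem_polyFuns hf).comp (continuous_inv.smul continuous_const)

end Average

theorem exists_invariant_mem_polyFuns_ne (G : Type*) [Group G] [TopologicalSpace G]
    [IsTopologicalGroup G] [CompactSpace G] {V : Type*} [AddCommGroup V] [Module ℝ V]
    [FiniteDimensional ℝ V] [TopologicalSpace V] [IsTopologicalAddGroup V] [ContinuousSMul ℝ V]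
    [T2Space V] [MulAction G V] [ContinuousSMul G V]
    (hlin : ∀ g : G, IsLinearMap ℝ (fun v : V => g • v)) {u v : V}
    (huv : u ∉ MulAction.orbit G v) :
    ∃ P ∈ polyFuns V, (∀ (g : G) (w : V), P (g • w) = P w) ∧ P u ≠ P v := by
  borelize G
  obtain ⟨μ, _, _⟩ := exists_isProbabilityMeasure_isMulLeftInvariant G
  have hcompact (w : V) : IsCompact (MulAction.orbit G w) :=
    isCompact_range (continuous_id.smul continuous_const)
  have hdisj : Disjoint (MulAction.orbit G v) (MulAction.orbit G u) :=
    (MulAction.orbit.eq_or_disjoint v u).resolve_left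
      fun h => huv (MulAction.orbit_eq_iff.mp h.symm)
  obtain ⟨f, hf, hfv, hfu⟩ := exists_mem_polyFuns_separating (hcompact v) (hcompact u) hdisj
  have hfc := continuous_of_mem_polyFuns hf
  refine ⟨orbitAverage μ f, orbitAverage_mem_polyFuns μ hlin hf, orbitAverage_smul μ f, ?_⟩
  have hv : orbitAverage μ f v ≤ 1 / 3 := orbitAverage_const μ (1 / 3 : ℝ) v ▸
    orbitAverage_mono μ hfc continuous_const fun x hx => (hfv x hx).le
  have hu : 2 / 3 ≤ orbitAverage μ f u := orbitAverage_const μ (2 / 3 : ℝ) u ▸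
    orbitAverage_mono μ continuous_const hfc fun x hx => (hfu x hx).le
  intro h
  linarith

/-- If `p_1, …, p_r` is an integrity basis (a generating set of the algebra of all `G`-invariant
polynomial functions on `V`, `G` compact), then `p_i(u) = p_i(v)` for all `i` iff `u` and `v`
lie in the same `G`-orbit. -/
theorem integrity_basis_separates_orbits
    (G : Type*) [Group G] [TopologicalSpace G] [IsTopologicalGroup G] [CompactSpace G]
    (V : Type*) [AddCommGroup V] [Module ℝ V] [FiniteDimensional ℝ V]
    [TopologicalSpace V] [IsTopologicalAddGroup V] [ContinuousSMul ℝ V] [T2Space V]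
    [MulAction G V] [ContinuousSMul G V]
    (hlin : ∀ g : G, IsLinearMap ℝ (fun v : V => g • v))
    (r : ℕ) (p : Fin r → (V → ℝ))
    (hp : ∀ i, p i ∈ polyFuns V ∧ ∀ (g : G) (w : V), (p i) (g • w) = (p i) w)
    (hgen : (Algebra.adjoin ℝ (Set.range p) : Set (V → ℝ)) =
      {f : V → ℝ | f ∈ polyFuns V ∧ ∀ (g : G) (w : V), f (g • w) = f w}) :
    ∀ u v : V, (∀ i, p i u = p i v) ↔ u ∈ MulAction.orbit G v := by
  intro u v
  refine ⟨fun hpuv => ?_, ?_⟩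
  · by_contra huv
    obtain ⟨P, hP, hPinv, hPuv⟩ := exists_invariant_mem_polyFuns_ne G hlin huv
    have hPadj : P ∈ Algebra.adjoin ℝ (Set.range p) := by
      rw [← SetLike.mem_coe, hgen]
      exact ⟨hP, hPinv⟩
    exact hPuv (apply_eq_apply_of_mem_adjoin (by rintro _ ⟨i, rfl⟩; exact hpuv i) hPadj)
  · rintro ⟨g, rfl⟩ i
    exact (hp i).2 g v
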